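/- arXiv:1609.04052 — 12 statements merged into one kernel-verified Lean document; each statement's English description precedes it below -/
import Mathlib

section
/- Every direct summand of an A-C3 module is also an A-C3 module, where A is a class of right R-modules closed under isomorphisms. -/
universe u v

/-- A submodule is a direct summand if it has a complement. -/
def IsSummand {R : Type u} [Ring R] {M : Type v} [AddCommGroup M] [Module R M]
    (X : Submodule R M) : Prop :=
  ∃ Y : Submodule R M, IsCompl X Y

/-- A class of modules is closed under isomorphisms. -/
def ClosedUnderIso (R : Type u) [Ring R]
    (A : (N : Type v) → [AddCommGroup N] → [Module R N] → Prop) : Prop :=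
  ∀ (N₁ N₂ : Type v) [AddCommGroup N₁] [Module R N₁] [AddCommGroup N₂] [Module R N₂],
    (N₁ ≃ₗ[R] N₂) → A N₁ → A N₂

/-- A class of modules is closed under direct summands. -/
def ClosedUnderSummands (R : Type u) [Ring R]
    (A : (N : Type v) → [AddCommGroup N] → [Module R N] → Prop) : Prop :=
  ∀ (N : Type v) [AddCommGroup N] [Module R N] (X : Submodule R N),
    IsSummand X → A N → A X

/-- `M` is an `A`-C3 module. -/
def IsAC3 (R : Type u) [Ring R]
    (A : (N : Type v) → [AddCommGroup N] → [Module R N] → Prop)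
    (M : Type v) [AddCommGroup M] [Module R M] : Prop :=
  ∀ X Y : Submodule R M, A X → A Y → IsSummand X → IsSummand Y →
    X ⊓ Y = ⊥ → IsSummand (X ⊔ Y)

/-- `M` is an `A`-D3 module. -/
def IsAD3 (R : Type u) [Ring R]
    (A : (N : Type v) → [AddCommGroup N] → [Module R N] → Prop)
    (M : Type v) [AddCommGroup M] [Module R M] : Prop :=
  ∀ X Y : Submodule R M, IsSummand X → IsSummand Y →
    A (M ⧸ X) → A (M ⧸ Y) → X ⊔ Y = ⊤ → IsSummand (X ⊓ Y)

/-- `N` is `K`-injective: every map from a submodule of `K` to `N` extends to `K`. -/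
def IsInjectiveFor (R : Type u) [Ring R] (K : Type v) [AddCommGroup K] [Module R K]
    (N : Type v) [AddCommGroup N] [Module R N] : Prop :=
  ∀ (A : Submodule R K) (f : A →ₗ[R] N), ∃ g : K →ₗ[R] N, ∀ a : A, g a = f a

/-- `N` is `A`-injective: `N` is `K`-injective for every `K ∈ A`. -/
def IsAInjective (R : Type u) [Ring R]
    (A : (N : Type v) → [AddCommGroup N] → [Module R N] → Prop)
    (N : Type v) [AddCommGroup N] [Module R N] : Prop :=
  ∀ (K : Type v) [AddCommGroup K] [Module R K], A K → IsInjectiveFor R K N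

/-- `P` is `K`-projective: every map from `P` to a quotient of `K` lifts to `K`. -/
def IsProjectiveFor (R : Type u) [Ring R] (P : Type v) [AddCommGroup P] [Module R P]
    (K : Type v) [AddCommGroup K] [Module R K] : Prop :=
  ∀ (L : Type v) [AddCommGroup L] [Module R L] (g : K →ₗ[R] L) (f : P →ₗ[R] L),
    Function.Surjective g → ∃ h : P →ₗ[R] K, g ∘ₗ h = f

/-- `P` is `A`-projective: `P` is `K`-projective for every `K ∈ A`. -/
def IsAProjective (R : Type u) [Ring R]
    (A : (N : Type v) → [AddCommGroup N] → [Module R N] → Prop)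
    (P : Type v) [AddCommGroup P] [Module R P] : Prop :=
  ∀ (K : Type v) [AddCommGroup K] [Module R K], A K → IsProjectiveFor R P K

/-- An indecomposable module: nonzero, and its only direct summands are trivial. -/
def Indecomposable' (R : Type u) [Ring R] (M : Type v) [AddCommGroup M] [Module R M] : Prop :=
  Nontrivial M ∧ ∀ X : Submodule R M, IsSummand X → X = ⊥ ∨ X = ⊤

/-! Summands `X`, `Y` of `N`, viewed inside `M`, are summands of `M` (if `X ⊔ X' = N` and
`N ⊕ N' = M`, then `X ⊕ (X' ⊔ N') = M`) and still lie in `A`, being isomorphic to `X`, `Y`. So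
`X ⊔ Y` is a summand of `M`, and a summand of `M` contained in `N` is a summand of `N` by
modularity of the submodule lattice. -/

section

variable {R : Type u} [Ring R] {M : Type v} [AddCommGroup M] [Module R M]

theorem IsSummand.of_map_subtype {N : Submodule R M} {X : Submodule R N}
    (hX : IsSummand (X.map N.subtype)) : IsSummand X := by
  obtain ⟨Y, hY⟩ := hX
  refine ⟨Y.comap N.subtype, ?_⟩
  simpa only [Submodule.comap_map_eq_of_injective N.injective_subtype] using
    Submodule.isCompl_comap_subtype_of_isCompl_of_le hY (Submodule.map_subtype_le N X)

theorem IsSummand.map_subtype {N : Submodule R M} (hN : IsSummand N) {X : Submodule R N}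
    (hX : IsSummand X) : IsSummand (X.map N.subtype) := by
  obtain ⟨N', hN'⟩ := hN
  obtain ⟨X', hX'⟩ := hX
  obtain ⟨hdisj, hsup⟩ := Set.Iic.isCompl_iff.mp (N.mapIic.isCompl_iff.mp hX')
  simp only [Submodule.coe_mapIic_apply] at hdisj hsup
  exact ⟨X'.map N.subtype ⊔ N', hdisj.isCompl_sup_right_of_isCompl_sup_left (by rwa [hsup])⟩

end

theorem summand_of_AC3 {R : Type u} [Ring R]
    (A : (N : Type v) → [AddCommGroup N] → [Module R N] → Prop)
    (hiso : ClosedUnderIso R A)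
    (M : Type v) [AddCommGroup M] [Module R M]
    (hM : IsAC3 R A M) (N : Submodule R M) (hN : IsSummand N) :
    IsAC3 R A N := by
  intro X Y hAX hAY hX hY hXY
  have hdisj : X.map N.subtype ⊓ Y.map N.subtype = ⊥ := by
    rw [← Submodule.map_inf _ N.injective_subtype, hXY, Submodule.map_bot]
  have hsum := hM _ _ (hiso _ _ (N.equivSubtypeMap X) hAX) (hiso _ _ (N.equivSubtypeMap Y) hAY)
    (hN.map_subtype hX) (hN.map_subtype hY) hdisj
  rw [← Submodule.map_sup] at hsum
  exact hsum.of_map_subtype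
end

section
/- Every direct summand of an A-D3 module is also an A-D3 module, where A is a class of right R-modules closed under isomorphisms. -/
universe u v

/-!
Write `M = N ⊕ N'`. Sending a submodule `X` of `N` to `X ⊕ N'` identifies the submodules of `N`
with the submodules of `M` containing `N'`; this correspondence preserves sums and intersections,
direct summands in both directions, and the quotients, since `M / (X ⊕ N') ≅ N / X`. So the
`A`-D3 condition for a pair of summands of `N` is the `A`-D3 condition for the corresponding pair
of summands of `M`.
-/

namespace Submodule

variable {R : Type*} [Ring R] {M : Type*} [AddCommGroup M] [Module R M] {N N' : Submodule R M}

def extendBy (N' : Submodule R M) (X : Submodule R N) : Submodule R M :=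
  X.map N.subtype ⊔ N'

lemma comap_subtype_extendBy (hN : Disjoint N N') (X : Submodule R N) :
    (extendBy N' X).comap N.subtype = X :=
  comap_map_sup_of_comap_le <| by rw [disjoint_iff_comap_eq_bot.mp hN]; exact bot_le

lemma extendBy_sup (X Y : Submodule R N) :
    extendBy N' (X ⊔ Y) = extendBy N' X ⊔ extendBy N' Y := by
  rw [extendBy, extendBy, extendBy, map_sup, sup_sup_sup_comm, sup_idem]

lemma extendBy_top (hN : Codisjoint N N') : extendBy N' (⊤ : Submodule R N) = ⊤ := by
  rw [extendBy, map_subtype_top, hN.eq_top]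

lemma extendBy_inf (hN : Disjoint N N') (X Y : Submodule R N) :
    extendBy N' (X ⊓ Y) = extendBy N' X ⊓ extendBy N' Y := by
  have hX : extendBy N' X ⊓ N = X.map N.subtype := by
    rw [inf_comm, ← map_comap_subtype, comap_subtype_extendBy hN]
  have hY : N ⊓ Y.map N.subtype = Y.map N.subtype := inf_eq_right.mpr (map_subtype_le N Y)
  calc extendBy N' (X ⊓ Y) = (extendBy N' X ⊓ N ⊓ Y.map N.subtype) ⊔ N' := by
        rw [extendBy, map_inf _ N.injective_subtype, hX]
    _ = extendBy N' X ⊓ extendBy N' Y := by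
        rw [inf_assoc, hY, extendBy, extendBy, inf_sup_assoc_of_le _ le_sup_right]

lemma isSummand_extendBy (hN : IsCompl N N') {X : Submodule R N} (hX : IsSummand X) :
    IsSummand (extendBy N' X) := by
  obtain ⟨X', hX'⟩ := hX
  have hdisj : Disjoint (X'.map N.subtype) (X.map N.subtype) := by
    rw [disjoint_iff, ← map_inf _ N.injective_subtype, hX'.symm.inf_eq_bot, map_bot]
  have hsup : X'.map N.subtype ⊔ X.map N.subtype = N := by
    rw [← map_sup, hX'.symm.sup_eq_top, map_subtype_top]
  exact ⟨_, (hdisj.isCompl_sup_right_of_isCompl_sup_left (by rwa [hsup])).symm⟩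

lemma isSummand_of_isSummand_extendBy (hN : IsCompl N N') {X : Submodule R N}
    (hX : IsSummand (extendBy N' X)) : IsSummand X := by
  obtain ⟨C, hC⟩ := hX
  have hXN' : Disjoint (X.map N.subtype) N' := hN.disjoint.mono_left (map_subtype_le N X)
  have hcompl := isCompl_comap_subtype_of_isCompl_of_le
    (hXN'.isCompl_sup_right_of_isCompl_sup_left hC) (map_subtype_le N X)
  rw [comap_map_eq_of_injective N.injective_subtype] at hcompl
  exact ⟨_, hcompl⟩

noncomputable def quotientEquivQuotientExtendBy (hN : IsCompl N N') (X : Submodule R N) :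
    (N ⧸ X) ≃ₗ[R] M ⧸ extendBy N' X :=
  let f := (extendBy N' X).mkQ ∘ₗ N.subtype
  have hker : X = LinearMap.ker f := by
    rw [LinearMap.ker_comp, ker_mkQ, comap_subtype_extendBy hN.disjoint]
  have hsurj : Function.Surjective f := by
    rw [← LinearMap.range_eq_top, LinearMap.range_comp, range_subtype, map_mkQ_eq_top, eq_top_iff,
      ← hN.codisjoint.eq_top, sup_comm N]
    exact sup_le_sup_right le_sup_right N
  (quotEquivOfEq _ _ hker).trans (f.quotKerEquivOfSurjective hsurj)

end Submodule

theorem summand_of_AD3 {R : Type u} [Ring R]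
    (A : (N : Type v) → [AddCommGroup N] → [Module R N] → Prop)
    (hiso : ClosedUnderIso R A)
    (M : Type v) [AddCommGroup M] [Module R M]
    (hM : IsAD3 R A M) (N : Submodule R M) (hN : IsSummand N) :
    IsAD3 R A N := by
  obtain ⟨N', hN'⟩ := hN
  intro X Y hX hY hAX hAY hXY
  have hsup : Submodule.extendBy N' X ⊔ Submodule.extendBy N' Y = ⊤ := by
    rw [← Submodule.extendBy_sup, hXY, Submodule.extendBy_top hN'.codisjoint]
  have hinf := hM _ _ (Submodule.isSummand_extendBy hN' hX) (Submodule.isSummand_extendBy hN' hY)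
    (hiso _ _ (Submodule.quotientEquivQuotientExtendBy hN' X) hAX)
    (hiso _ _ (Submodule.quotientEquivQuotientExtendBy hN' Y) hAY) hsup
  rw [← Submodule.extendBy_inf hN'.disjoint] at hinf
  exact Submodule.isSummand_of_isSummand_extendBy hN' hinf
end

section
/- A module M is an A-C3 module if and only if: whenever A₁, B ∈ A are direct summands of M with A₁ ∩ B = 0, there exist submodules A₂ and B₂ of M with M = A₁ ⊕ B₂ = A₂ ⊕ B, A₁ ≤ A₂ and B ≤ B₂. -/
universe u v

/-! In the modular lattice of submodules, a complement `C` of `X ⊕ Y` yields `X₂ = X ⊕ C` and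
`Y₂ = Y ⊕ C`; conversely `X₂ ∩ Y₂` is a complement of `X ⊕ Y`. -/

section ModularLattice

variable {α : Type*} [Lattice α] [BoundedOrder α] [IsModularLattice α] {a b : α}

/-- By modularity `a ⊔ (a₂ ⊓ b₂) = a₂`, a complement of `b`. -/
theorem IsCompl.sup_isCompl_inf {a₂ b₂ : α} (hab₂ : IsCompl a b₂) (ha₂b : IsCompl a₂ b)
    (ha : a ≤ a₂) : IsCompl (a ⊔ b) (a₂ ⊓ b₂) := by
  have ha₂ : a ⊔ (a₂ ⊓ b₂) = a₂ := by
    rw [inf_comm, ← sup_inf_assoc_of_le b₂ ha, hab₂.sup_eq_top, top_inf_eq]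
  have hdisj : Disjoint a (a₂ ⊓ b₂) := hab₂.disjoint.mono_right inf_le_right
  rw [sup_comm]
  exact hdisj.isCompl_sup_left_of_isCompl_sup_right (ha₂.symm ▸ ha₂b.symm)

theorem Disjoint.exists_isCompl_sup_iff (h : Disjoint a b) :
    (∃ c, IsCompl (a ⊔ b) c) ↔
      ∃ a₂ b₂, IsCompl a b₂ ∧ IsCompl a₂ b ∧ a ≤ a₂ ∧ b ≤ b₂ := by
  constructor
  · rintro ⟨c, hc⟩
    refine ⟨a ⊔ c, b ⊔ c, h.isCompl_sup_right_of_isCompl_sup_left hc, ?_, le_sup_left,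
      le_sup_left⟩
    exact (h.symm.isCompl_sup_right_of_isCompl_sup_left (sup_comm a b ▸ hc)).symm
  · rintro ⟨a₂, b₂, hab₂, ha₂b, ha, -⟩
    exact ⟨_, hab₂.sup_isCompl_inf ha₂b ha⟩

end ModularLattice

theorem AC3_iff_compl_extension_general {R : Type u} [Ring R]
    (A : (N : Type v) → [AddCommGroup N] → [Module R N] → Prop)
    (M : Type v) [AddCommGroup M] [Module R M] :
    IsAC3 R A M ↔
      ∀ X Y : Submodule R M, A X → A Y → IsSummand X → IsSummand Y → X ⊓ Y = ⊥ →
        ∃ X₂ Y₂ : Submodule R M, IsCompl X Y₂ ∧ IsCompl X₂ Y ∧ X ≤ X₂ ∧ Y ≤ Y₂ := by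
  constructor
  · intro h X Y hAX hAY hX hY hXY
    exact (disjoint_iff.mpr hXY).exists_isCompl_sup_iff.mp (h X Y hAX hAY hX hY hXY)
  · intro h X Y hAX hAY hX hY hXY
    exact (disjoint_iff.mpr hXY).exists_isCompl_sup_iff.mpr (h X Y hAX hAY hX hY hXY)

theorem AC3_iff_compl_extension {R : Type u} [Ring R]
    (A : (N : Type v) → [AddCommGroup N] → [Module R N] → Prop)
    (hiso : ClosedUnderIso R A) (hsum : ClosedUnderSummands R A)
    (M : Type v) [AddCommGroup M] [Module R M] :
    IsAC3 R A M ↔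
      ∀ X Y : Submodule R M, A X → A Y → IsSummand X → IsSummand Y → X ⊓ Y = ⊥ →
        ∃ X₂ Y₂ : Submodule R M, IsCompl X Y₂ ∧ IsCompl X₂ Y ∧ X ≤ X₂ ∧ Y ≤ Y₂ :=
  AC3_iff_compl_extension_general A M
end

section
/- Let M be a module such that every factor module of M is A-injective, where A is a class of right R-modules closed under isomorphisms and direct summands. If M is an A-D3 module, then for any finite family X₁, …, Xₙ of direct summands of M with M/Xᵢ ∈ A for all i, the intersection ∩ᵢ Xᵢ is a direct summand of M. -/
universe u v

/-!
Induction on `n`. Put `T = Xₙ` with complement `C`. For `i < n`, the image of `T` in `M ⧸ Xᵢ` is a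
quotient of `M`, hence `(M ⧸ Xᵢ)`-injective and a summand; pulling back a complement gives a summand
`Eᵢ ⊇ Xᵢ` with `M ⧸ Eᵢ ∈ A`, `Eᵢ + T = M` and `Eᵢ ∩ T = Xᵢ ∩ T`. By A-D3, `Xᵢ ∩ T` is a summand,
so `Gᵢ = (Xᵢ ∩ T) ⊕ C` is a summand with `M ⧸ Gᵢ ≅ T ⧸ (Xᵢ ∩ T) ≅ M ⧸ Eᵢ ∈ A`. The induction
hypothesis applied to the `Gᵢ` makes `⋂ Gᵢ = (⋂ Xᵢ) ⊕ C` a summand, hence so is `⋂ Xᵢ`.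
-/

section Lattice

variable {α : Type*}

theorem IsCompl.isCompl_inf_of_inf_eq [Lattice α] [BoundedOrder α] [IsModularLattice α]
    {P Q F T : α} (hPQ : IsCompl P Q) (hinf : F ⊓ T = P) (hsup : F ⊔ T = ⊤) :
    IsCompl F (Q ⊓ T) := by
  have hPT : P ≤ T := by rw [← hinf]; exact inf_le_right
  have hPF : P ≤ F := by rw [← hinf]; exact inf_le_left
  constructor
  · rw [disjoint_iff, inf_comm Q, ← inf_assoc, hinf, hPQ.inf_eq_bot]
  · rw [codisjoint_iff, eq_top_iff, ← hsup]
    have hT : P ⊔ Q ⊓ T = T := by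
      rw [← sup_inf_assoc_of_le Q hPT, hPQ.sup_eq_top, top_inf_eq]
    calc F ⊔ T = F ⊔ (P ⊔ Q ⊓ T) := by rw [hT]
      _ ≤ F ⊔ Q ⊓ T := by rw [← sup_assoc, sup_eq_left.mpr hPF]

theorem iInf_inf_sup_eq_of_isCompl [CompleteLattice α] [IsModularLattice α] {ι : Sort*}
    {P : ι → α} {T C : α} (hTC : IsCompl T C) :
    ⨅ i, (P i ⊓ T ⊔ C) = (⨅ i, P i) ⊓ T ⊔ C := by
  refine le_antisymm ?_ (le_iInf fun i => sup_le_sup_right (inf_le_inf_right T (iInf_le _ i)) C)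
  set W := ⨅ i, (P i ⊓ T ⊔ C)
  have hCW : C ≤ W := le_iInf fun i => le_sup_right
  have hWT : W ⊓ T ≤ (⨅ i, P i) ⊓ T := le_inf (le_iInf fun i => calc
    W ⊓ T ≤ (P i ⊓ T ⊔ C) ⊓ T := inf_le_inf_right T (iInf_le _ i)
    _ = P i ⊓ T := by rw [sup_inf_assoc_of_le C inf_le_right, hTC.symm.inf_eq_bot, sup_bot_eq]
    _ ≤ P i := inf_le_left) inf_le_right
  calc W = W ⊓ (T ⊔ C) := by rw [hTC.sup_eq_top, inf_top_eq]
    _ = W ⊓ T ⊔ C := (inf_sup_assoc_of_le T hCW).symm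
    _ ≤ (⨅ i, P i) ⊓ T ⊔ C := sup_le_sup_right hWT C

theorem iInf_fin_succ_eq_inf_last [CompleteLattice α] {n : ℕ} (X : Fin (n + 1) → α) :
    ⨅ i, X i = (⨅ i : Fin n, X i.castSucc) ⊓ X (Fin.last n) := by
  refine le_antisymm (le_inf (le_iInf fun i => iInf_le _ _) (iInf_le _ _)) (le_iInf fun i => ?_)
  induction i using Fin.lastCases with
  | last => exact inf_le_right
  | cast i => exact inf_le_left.trans (iInf_le _ i)

end Lattice

section Modules

variable {R : Type u} [Ring R]

theorem IsInjectiveFor.congr_right {K N₁ N₂ : Type v} [AddCommGroup K] [Module R K]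
    [AddCommGroup N₁] [Module R N₁] [AddCommGroup N₂] [Module R N₂]
    (h : IsInjectiveFor R K N₁) (e : N₁ ≃ₗ[R] N₂) : IsInjectiveFor R K N₂ := by
  intro S f
  obtain ⟨g, hg⟩ := h S (e.symm.toLinearMap ∘ₗ f)
  exact ⟨e.toLinearMap ∘ₗ g, fun a => by simp [hg a]⟩

theorem IsInjectiveFor.isSummand {K : Type v} [AddCommGroup K] [Module R K]
    {N : Submodule R K} (h : IsInjectiveFor R K N) : IsSummand N := by
  obtain ⟨g, hg⟩ := h N LinearMap.id
  exact ⟨_, LinearMap.isCompl_of_proj hg⟩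

variable {M : Type v} [AddCommGroup M] [Module R M]
  (A : (N : Type v) → [AddCommGroup N] → [Module R N] → Prop)

theorem isSummand_range_of_isAInjective_quotient
    (hinj : ∀ W : Submodule R M, IsAInjective R A (M ⧸ W))
    {K : Type v} [AddCommGroup K] [Module R K] (hK : A K) (φ : M →ₗ[R] K) :
    IsSummand (LinearMap.range φ) :=
  ((hinj (LinearMap.ker φ) K hK).congr_right φ.quotKerEquivRange).isSummand

theorem exists_isSummand_ge_sup_eq_top
    (hiso : ClosedUnderIso R A) (hsum : ClosedUnderSummands R A)
    (hinj : ∀ W : Submodule R M, IsAInjective R A (M ⧸ W))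
    {X Y : Submodule R M} (hX : IsSummand X) (hAX : A (M ⧸ X)) (hY : IsSummand Y) :
    ∃ E : Submodule R M, IsSummand E ∧ A (M ⧸ E) ∧ X ≤ E ∧ E ⊓ Y ≤ X ∧ E ⊔ Y = ⊤ := by
  obtain ⟨X', hXX'⟩ := hX
  obtain ⟨Y', hYY'⟩ := hY
  have hrange : LinearMap.range (X.mkQ ∘ₗ Y.projection Y' hYY') = Y.map X.mkQ := by
    rw [LinearMap.range_comp, Submodule.range_projection]
  obtain ⟨L, hL⟩ := isSummand_range_of_isAInjective_quotient A hinj hAX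
    (X.mkQ ∘ₗ Y.projection Y' hYY')
  rw [hrange] at hL
  set E := L.comap X.mkQ
  have hXE : X ≤ E := fun x hx => by simp [E, (Submodule.Quotient.mk_eq_zero X).mpr hx]
  have hEY : E ⊓ Y ≤ X := by
    rintro y ⟨hyE, hyY⟩
    have hy : X.mkQ y ∈ Y.map X.mkQ ⊓ L := ⟨Submodule.mem_map_of_mem hyY, hyE⟩
    rwa [hL.inf_eq_bot, Submodule.mem_bot, Submodule.mkQ_apply,
      Submodule.Quotient.mk_eq_zero] at hy
  have hEYtop : E ⊔ Y = ⊤ := by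
    rw [← sup_eq_right.mpr hXE, sup_assoc, ← Submodule.map_mkQ_eq_top, Submodule.map_sup,
      Submodule.map_comap_eq_of_surjective X.mkQ_surjective, sup_comm, hL.sup_eq_top]
  have hEXY : E ⊓ (X ⊔ Y) = X := by
    rw [sup_comm X Y, ← inf_sup_assoc_of_le Y hXE, sup_eq_right.mpr hEY]
  have hLE : E.map X.mkQ = L := Submodule.map_comap_eq_of_surjective X.mkQ_surjective L
  have hAYX : A (Y.map X.mkQ) := hsum (M ⧸ X) _ ⟨L, hL⟩ hAX
  have eE : (M ⧸ E) ≃ₗ[R] Y.map X.mkQ :=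
    (Submodule.quotientQuotientEquivQuotient X E hXE).symm ≪≫ₗ
      Submodule.quotEquivOfEq _ _ hLE ≪≫ₗ Submodule.quotientEquivOfIsCompl L _ hL.symm
  refine ⟨E, ⟨_, hXX'.isCompl_inf_of_inf_eq hEXY ?_⟩, hiso _ _ eE.symm hAYX, hXE, hEY, hEYtop⟩
  rw [← sup_assoc, sup_eq_left.mpr hXE, hEYtop]

theorem IsAD3.isSummand_inf_sup_and_quotient
    (hiso : ClosedUnderIso R A) (hsum : ClosedUnderSummands R A)
    (hinj : ∀ W : Submodule R M, IsAInjective R A (M ⧸ W)) (hM : IsAD3 R A M)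
    {T C X : Submodule R M} (hTC : IsCompl T C) (hAT : A (M ⧸ T))
    (hX : IsSummand X) (hAX : A (M ⧸ X)) :
    IsSummand (X ⊓ T ⊔ C) ∧ A (M ⧸ (X ⊓ T ⊔ C)) := by
  obtain ⟨E, hE, hAE, hXE, hET, hETtop⟩ :=
    exists_isSummand_ge_sup_eq_top A hiso hsum hinj hX hAX ⟨C, hTC⟩
  have hinf : E ⊓ T = X ⊓ T := le_antisymm (le_inf hET inf_le_right) (inf_le_inf_right T hXE)
  obtain ⟨Q, hQ⟩ := hM E T hE ⟨C, hTC⟩ hAE hAT hETtop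
  rw [hinf] at hQ
  have hComplE : IsCompl E (Q ⊓ T) := hQ.isCompl_inf_of_inf_eq hinf hETtop
  have hComplG : IsCompl (X ⊓ T ⊔ C) (Q ⊓ T) := by
    refine hQ.isCompl_inf_of_inf_eq ?_ ?_
    · rw [sup_inf_assoc_of_le C inf_le_right, hTC.symm.inf_eq_bot, sup_bot_eq]
    · rw [sup_assoc, sup_comm C, hTC.sup_eq_top, sup_top_eq]
  refine ⟨⟨_, hComplG⟩, hiso _ _ ?_ hAE⟩
  exact Submodule.quotientEquivOfIsCompl _ _ hComplE ≪≫ₗ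
    (Submodule.quotientEquivOfIsCompl _ _ hComplG).symm

end Modules

theorem AD3_finite_inter_summand {R : Type u} [Ring R]
    (A : (N : Type v) → [AddCommGroup N] → [Module R N] → Prop)
    (hiso : ClosedUnderIso R A) (hsum : ClosedUnderSummands R A)
    (M : Type v) [AddCommGroup M] [Module R M]
    (hinj : ∀ X : Submodule R M, IsAInjective R A (M ⧸ X))
    (hM : IsAD3 R A M)
    (n : ℕ) (X : Fin n → Submodule R M)
    (hXsum : ∀ i, IsSummand (X i)) (hXA : ∀ i, A (M ⧸ X i)) :
    IsSummand (⨅ i, X i) := by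
  induction n with
  | zero => exact ⟨⊥, by rw [iInf_of_empty]; exact isCompl_top_bot⟩
  | succ n ih =>
    set T := X (Fin.last n)
    obtain ⟨C, hTC⟩ := hXsum (Fin.last n)
    have hG (i : Fin n) : IsSummand (X i.castSucc ⊓ T ⊔ C) ∧ A (M ⧸ (X i.castSucc ⊓ T ⊔ C)) :=
      hM.isSummand_inf_sup_and_quotient A hiso hsum hinj hTC (hXA _) (hXsum _) (hXA _)
    obtain ⟨D, hD⟩ := ih (fun i => X i.castSucc ⊓ T ⊔ C) (fun i => (hG i).1) (fun i => (hG i).2)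
    rw [iInf_inf_sup_eq_of_isCompl hTC, ← iInf_fin_succ_eq_inf_last] at hD
    have hdisj : Disjoint (⨅ i, X i) C := hTC.disjoint.mono_left (iInf_le _ _)
    exact ⟨C ⊔ D, hdisj.isCompl_sup_right_of_isCompl_sup_left hD⟩
end

section
/- Let M be a module such that every submodule of M is A-projective, where A is a class of right R-modules closed under isomorphisms and direct summands. Then M is an A-C3 module if and only if for any two direct summands M₁, M₂ of M with M₁, M₂ ∈ A, the sum M₁ + M₂ is a direct summand of M. -/
universe u v

/-!
Write `M = X ⊕ X'` and let `q` be the projection onto `X'` along `X`. Its image `q(Y)` is a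
submodule of `M`, hence `Y`-projective, so the surjection `Y → q(Y)` splits and
`Y = S ⊕ (X ∩ Y)`. Being a summand of `Y`, the module `S` lies in `A` and is a summand of `M`;
moreover `X ∩ S = 0` and `X + S = X + Y`, so C3 applied to `X` and `S` gives the claim.
-/

open LinearMap Submodule

section
variable {R : Type u} [Ring R] {M : Type v} [AddCommGroup M] [Module R M]

lemma isSummand_of_disjoint_of_isSummand_sup {S K : Submodule R M} (hSK : Disjoint S K)
    (h : IsSummand (S ⊔ K)) : IsSummand S := by
  obtain ⟨C, hC⟩ := h
  refine ⟨K ⊔ C, hSK.disjoint_sup_right_of_disjoint_sup_left hC.disjoint, ?_⟩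
  rw [codisjoint_iff, ← sup_assoc]
  exact hC.codisjoint.eq_top

lemma isCompl_comap_subtype_of_disjoint_of_sup_eq {S K Y : Submodule R M} (hSK : Disjoint S K)
    (hSKY : S ⊔ K = Y) : IsCompl (S.comap Y.subtype) (K.comap Y.subtype) := by
  have hS : S ≤ Y := hSKY ▸ le_sup_left
  have hK : K ≤ Y := hSKY ▸ le_sup_right
  constructor
  · rw [disjoint_iff, ← comap_inf, hSK.eq_bot, comap_bot, ker_subtype]
  · rw [codisjoint_iff]
    apply map_injective_of_injective Y.injective_subtype
    rw [Submodule.map_sup, map_comap_subtype, map_comap_subtype, inf_eq_right.2 hS,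
      inf_eq_right.2 hK, hSKY, map_subtype_top]

lemma ClosedUnderSummands.of_disjoint_of_sup_eq
    {A : (N : Type v) → [AddCommGroup N] → [Module R N] → Prop}
    (hsum : ClosedUnderSummands R A) (hiso : ClosedUnderIso R A) {S K Y : Submodule R M}
    (hSK : Disjoint S K) (hSKY : S ⊔ K = Y) (hY : A Y) : A S :=
  hiso _ _ (comapSubtypeEquivOfLe (hSKY ▸ le_sup_left))
    (hsum Y _ ⟨_, isCompl_comap_subtype_of_disjoint_of_sup_eq hSK hSKY⟩ hY)

lemma exists_disjoint_ker_and_sup_eq_of_comp_eq_id {N : Type*} [AddCommGroup N] [Module R N]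
    (f : M →ₗ[R] N) (Y : Submodule R M) (s : Y.map f →ₗ[R] Y)
    (hs : f.submoduleMap Y ∘ₗ s = LinearMap.id) :
    ∃ S : Submodule R M, Disjoint S (ker f) ∧ S ⊔ (ker f ⊓ Y) = Y := by
  have hfs (z : Y.map f) : f (s z) = z := congr($(LinearMap.ext_iff.1 hs z))
  refine ⟨range (Y.subtype ∘ₗ s), ?_, le_antisymm ?_ fun y hy ↦ ?_⟩
  · rw [disjoint_def]
    rintro _ ⟨z, rfl⟩ hz
    have hz0 : z = 0 := Subtype.ext (by rw [← hfs z]; exact hz)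
    simp [hz0]
  · exact sup_le (by rintro _ ⟨z, rfl⟩; exact (s z).2) inf_le_right
  · set z : Y.map f := f.submoduleMap Y ⟨y, hy⟩
    have hker : y - s z ∈ ker f ⊓ Y := ⟨by simp [z, hfs z], Y.sub_mem hy (s z).2⟩
    simpa using add_mem (mem_sup_left (mem_range_self (Y.subtype ∘ₗ s) z)) (mem_sup_right hker)

end

theorem AC3_iff_sum_of_summands {R : Type u} [Ring R]
    (A : (N : Type v) → [AddCommGroup N] → [Module R N] → Prop)
    (hiso : ClosedUnderIso R A) (hsum : ClosedUnderSummands R A)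
    (M : Type v) [AddCommGroup M] [Module R M]
    (hproj : ∀ N : Submodule R M, IsAProjective R A N) :
    IsAC3 R A M ↔
      ∀ X Y : Submodule R M, A X → A Y → IsSummand X → IsSummand Y →
        IsSummand (X ⊔ Y) := by
  refine ⟨fun hC3 X Y hAX hAY hX hY ↦ ?_, fun h X Y hAX hAY hX hY _ ↦ h X Y hAX hAY hX hY⟩
  obtain ⟨X', hXX'⟩ := id hX
  set q := X'.projection X hXX'.symm
  obtain ⟨s, hs⟩ := hproj (Y.map q) Y hAY _ (q.submoduleMap Y) LinearMap.id
    (q.submoduleMap_surjective Y)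
  obtain ⟨S, hSX, hSY⟩ := exists_disjoint_ker_and_sup_eq_of_comp_eq_id q Y s hs
  rw [ker_projection] at hSX hSY
  have hSXY : Disjoint S (X ⊓ Y) := hSX.mono_right inf_le_left
  have hsup : X ⊔ S = X ⊔ Y := by
    rw [← hSY, sup_left_comm, sup_inf_self, sup_comm]
  rw [← hsup]
  exact hC3 X S hAX (hsum.of_disjoint_of_sup_eq hiso hSXY hSY hAY) hX
    (isSummand_of_disjoint_of_isSummand_sup hSXY (hSY.symm ▸ hY)) hSX.symm.eq_bot
end

section
/- Let M be a module such that every submodule of M is A-projective, where A is a class of artinian right R-modules closed under isomorphisms and direct summands. If M is an A-C3 module, then every submodule N ∈ A of M that is isomorphic to a direct summand of M is itself a direct summand of M. -/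
universe u v

/-!
Write `M = D ⊕ D'` with `e : N ≅ D`, let `π` be the projection onto `D` along `D'`, and induct
on `N` inside an artinian submodule.
* If `N ∩ D' = 0`, then `π|_N` is injective, hence bijective onto `D ≅ N` as `N` is artinian,
  so `M = N ⊕ D'`.
* If `N ≤ D'`, the graph `X = {n + e n}` of `e` is a complement of `D'` with `X ∩ D = 0`, so C3
  makes `X ⊕ D = N ⊕ D` a summand, and then so is `N`.
* Otherwise `π(N)`, being `N`-projective, splits `π|_N`: `N = N₁ ⊕ (N ∩ D')` with both pieces
  proper. Transported along `e`, this splits the summand `D`, so both pieces are isomorphic to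
  summands, hence summands by induction, and C3 glues them back to `N`.
-/

theorem LinearMap.exists_isCompl_ker_of_isProjectiveFor_range {R : Type u} [Ring R]
    {P Q : Type v} [AddCommGroup P] [Module R P] [AddCommGroup Q] [Module R Q]
    (f : P →ₗ[R] Q) (hf : IsProjectiveFor R (LinearMap.range f) P) :
    ∃ S : Submodule R P, IsCompl S (LinearMap.ker f) := by
  obtain ⟨s, hs⟩ := hf _ f.rangeRestrict LinearMap.id f.surjective_rangeRestrict
  have hidem : IsIdempotentElem (s ∘ₗ f.rangeRestrict) :=
    LinearMap.ext fun x => congrArg s (LinearMap.congr_fun hs (f.rangeRestrict x))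
  have hker : LinearMap.ker (s ∘ₗ f.rangeRestrict) = LinearMap.ker f := by
    rw [LinearMap.ker_comp_of_ker_eq_bot _ (LinearMap.ker_eq_bot_of_inverse hs),
      LinearMap.ker_rangeRestrict]
  exact ⟨_, hker ▸ LinearMap.IsIdempotentElem.isCompl hidem⟩

namespace Submodule

open LinearMap

variable {R : Type*} [Ring R] {M : Type*} [AddCommGroup M] [Module R M] {D D' N : Submodule R M}

theorem isCompl_of_bijective_projectionOnto_comp_subtype (hD : IsCompl D D') {X : Submodule R M}
    (hX : Function.Bijective (D.projectionOnto D' hD ∘ₗ X.subtype)) : IsCompl X D' := by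
  set π := D.projectionOnto D' hD
  constructor
  · refine disjoint_def.2 fun x hxX hxD' => ?_
    have : (⟨x, hxX⟩ : X) = 0 := hX.1 <| by
      simp [π, projectionOnto_apply_of_mem_right hD hxD']
    simpa using congrArg Subtype.val this
  · refine codisjoint_iff_le_sup.2 fun m _ => ?_
    obtain ⟨x, hx⟩ := hX.2 (π m)
    refine mem_sup.2 ⟨x, x.2, m - x, ?_, add_sub_cancel _ _⟩
    rw [← projectionOnto_apply_eq_zero_iff hD, map_sub, sub_eq_zero]
    exact hx.symm

theorem isCompl_of_disjoint_of_linearEquiv [IsArtinian R N] (hD : IsCompl D D')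
    (hN : Disjoint N D') (e : N ≃ₗ[R] D) : IsCompl N D' := by
  set f := D.projectionOnto D' hD ∘ₗ N.subtype
  have hf : Function.Injective f := by
    refine (injective_iff_map_eq_zero f).2 fun n hn => ?_
    have : (n : M) ∈ D' := (projectionOnto_apply_eq_zero_iff hD).1 hn
    exact Subtype.ext (disjoint_def.1 hN _ n.2 this)
  have hsurj : Function.Surjective (e.symm ∘ₗ f) :=
    IsArtinian.surjective_of_injective_endomorphism _ (e.symm.injective.comp hf)
  refine isCompl_of_bijective_projectionOnto_comp_subtype hD ⟨hf, fun d => ?_⟩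
  obtain ⟨n, hn⟩ := hsurj (e.symm d)
  exact ⟨n, e.symm.injective hn⟩

theorem exists_isCompl_sup_eq_of_le_of_linearEquiv (hD : IsCompl D D') (hN : N ≤ D')
    (e : N ≃ₗ[R] D) :
    ∃ X : Submodule R M, Nonempty (N ≃ₗ[R] X) ∧ IsCompl X D' ∧ Disjoint X D ∧ X ⊔ D = N ⊔ D := by
  set g := N.subtype + D.subtype ∘ₗ e.toLinearMap
  have hg : ∀ n : N, g n = n + e n := fun _ => rfl
  have hπg : ⇑(D.projectionOnto D' hD) ∘ g = e := by
    ext n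
    simp [hg, projectionOnto_apply_of_mem_right hD (hN n.2)]
  have hg_inj : Function.Injective g := Function.Injective.of_comp (hπg ▸ e.injective)
  have hbij : Function.Bijective (D.projectionOnto D' hD ∘ₗ (range g).subtype) := by
    have he : Function.Bijective
        (⇑(D.projectionOnto D' hD ∘ₗ (range g).subtype) ∘ g.rangeRestrict) := hπg ▸ e.bijective
    exact ⟨he.1.of_comp_right g.surjective_rangeRestrict, he.2.of_comp⟩
  refine ⟨range g, ⟨LinearEquiv.ofInjective g hg_inj⟩,
    isCompl_of_bijective_projectionOnto_comp_subtype hD hbij, ?_, ?_⟩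
  · refine disjoint_def.2 ?_
    rintro _ ⟨n, rfl⟩ hnD
    have hn : (n : M) ∈ D := by
      simpa [hg] using sub_mem hnD (e n).2
    have hn0 : n = 0 := Subtype.ext (disjoint_def.1 hD.disjoint _ hn (hN n.2))
    rw [hn0, map_zero]
  · refine le_antisymm (sup_le ?_ le_sup_right) (sup_le (fun n hn => ?_) le_sup_right)
    · rintro _ ⟨n, rfl⟩
      exact add_mem (mem_sup_left n.2) (mem_sup_right (e n).2)
    · have : n = g ⟨n, hn⟩ - e ⟨n, hn⟩ := by simp [hg]
      exact this ▸ sub_mem (mem_sup_left ⟨⟨n, hn⟩, rfl⟩) (mem_sup_right (e _).2)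

theorem isCompl_map_sup_of_isCompl {P : Type*} [AddCommGroup P] [Module R P] {f : P →ₗ[R] M}
    (hf : Function.Injective f) (hD : IsCompl (range f) D') {S T : Submodule R P}
    (hST : IsCompl S T) : IsCompl (S.map f) (T.map f ⊔ D') := by
  refine (disjoint_map hf hST.disjoint).isCompl_sup_right_of_isCompl_sup_left ?_
  rwa [← map_sup, hST.sup_eq_top, map_top]

theorem exists_isSummand_linearEquiv_map_subtype (hD : IsCompl D D') (e : N ≃ₗ[R] D)
    {S T : Submodule R N} (hST : IsCompl S T) :
    ∃ D₁ : Submodule R M, IsSummand D₁ ∧ Nonempty (S.map N.subtype ≃ₗ[R] D₁) := by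
  set f := D.subtype ∘ₗ e.toLinearMap
  have hf : Function.Injective f := D.injective_subtype.comp e.injective
  have hrange : range f = D := by
    rw [range_comp, LinearEquiv.range, map_top, range_subtype]
  exact ⟨S.map f, ⟨_, isCompl_map_sup_of_isCompl hf (hrange ▸ hD) hST⟩,
    ⟨(equivMapOfInjective _ N.injective_subtype S).symm ≪≫ₗ equivMapOfInjective f hf S⟩⟩

theorem map_subtype_lt_of_isCompl {S T : Submodule R N} (hST : IsCompl S T) (hT : T ≠ ⊥) :
    S.map N.subtype < N := by
  conv_rhs => rw [← map_subtype_top N]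
  refine (map_lt_map_iff_of_injective N.injective_subtype).2 (lt_top_iff_ne_top.2 ?_)
  rintro rfl
  exact hT (eq_bot_of_top_isCompl hST)

end Submodule

section AC3

open Submodule

variable {R : Type u} [Ring R] {A : (N : Type v) → [AddCommGroup N] → [Module R N] → Prop}
  {M : Type v} [AddCommGroup M] [Module R M]

theorem ClosedUnderSummands.map_subtype_of_isCompl (hiso : ClosedUnderIso R A)
    (hsum : ClosedUnderSummands R A) {N : Submodule R M} (hN : A N) {S T : Submodule R N}
    (hST : IsCompl S T) : A (S.map N.subtype) :=
  hiso _ _ (equivMapOfInjective _ N.injective_subtype S) (hsum N S ⟨T, hST⟩ hN)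

theorem IsAC3.isSummand_of_le_of_isCompl (hiso : ClosedUnderIso R A) (hM : IsAC3 R A M)
    {N D D' : Submodule R M} (hN : A N) (hD : IsCompl D D') (hND' : N ≤ D') (e : N ≃ₗ[R] D) :
    IsSummand N := by
  obtain ⟨X, ⟨eX⟩, hX, hXD, hsup⟩ := exists_isCompl_sup_eq_of_le_of_linearEquiv hD hND' e
  have hXD_summand : IsSummand (X ⊔ D) :=
    hM X D (hiso _ _ eX hN) (hiso _ _ e hN) ⟨D', hX⟩ ⟨D', hD⟩ hXD.eq_bot
  obtain ⟨E, hE⟩ := hsup ▸ hXD_summand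
  exact ⟨D ⊔ E, (hD.disjoint.symm.mono_left hND').isCompl_sup_right_of_isCompl_sup_left hE⟩

theorem IsAC3.isSummand_of_isArtinian (hiso : ClosedUnderIso R A)
    (hsum : ClosedUnderSummands R A)
    (hart : ∀ (N : Type v) [AddCommGroup N] [Module R N], A N → IsArtinian R N)
    (hproj : ∀ N : Submodule R M, IsAProjective R A N) (hM : IsAC3 R A M)
    (N₀ : Submodule R M) [IsArtinian R N₀] (N : Set.Iic N₀) (hN : A N.1)
    (hD : ∃ D : Submodule R M, IsSummand D ∧ Nonempty (N.1 ≃ₗ[R] D)) : IsSummand N.1 := by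
  have : WellFoundedLT (Set.Iic N₀) := (mapIic N₀).symm.strictMono.wellFoundedLT
  induction N using WellFoundedLT.induction with
  | _ N IH =>
    obtain ⟨D, ⟨D', hD⟩, ⟨e⟩⟩ := hD
    have := hart N hN
    by_cases hdisj : Disjoint N.1 D'
    · exact ⟨D', isCompl_of_disjoint_of_linearEquiv hD hdisj e⟩
    by_cases hle : N.1 ≤ D'
    · exact hM.isSummand_of_le_of_isCompl hiso hN hD hle e
    obtain ⟨S, hST⟩ :=
      (D.projection D' hD ∘ₗ N.1.subtype).exists_isCompl_ker_of_isProjectiveFor_range (hproj _ N hN)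
    rw [LinearMap.ker_comp, ker_projection] at hST
    set T := D'.comap N.1.subtype
    have hT_ne_bot : T ≠ ⊥ := mt disjoint_iff_comap_eq_bot.2 hdisj
    have hS_ne_bot : S ≠ ⊥ := fun h =>
      mt comap_subtype_eq_top.1 hle (eq_top_of_bot_isCompl (h ▸ hST))
    have hpiece {S₁ S₂ : Submodule R N.1} (h : IsCompl S₁ S₂) (h₂ : S₂ ≠ ⊥) :
        IsSummand (S₁.map N.1.subtype) :=
      IH ⟨_, (map_subtype_le _ _).trans N.2⟩ (map_subtype_lt_of_isCompl h h₂)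
        (hsum.map_subtype_of_isCompl hiso hN h) (exists_isSummand_linearEquiv_map_subtype hD e h)
    have hsup := hM _ _ (hsum.map_subtype_of_isCompl hiso hN hST)
      (hsum.map_subtype_of_isCompl hiso hN hST.symm)
      (hpiece hST hT_ne_bot) (hpiece hST.symm hS_ne_bot)
      (disjoint_map N.1.injective_subtype hST.disjoint).eq_bot
    rwa [← Submodule.map_sup, hST.sup_eq_top, map_subtype_top] at hsup

end AC3

theorem AC3_iso_summand_of_artinian {R : Type u} [Ring R]
    (A : (N : Type v) → [AddCommGroup N] → [Module R N] → Prop)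
    (hiso : ClosedUnderIso R A) (hsum : ClosedUnderSummands R A)
    (hart : ∀ (N : Type v) [AddCommGroup N] [Module R N], A N → IsArtinian R N)
    (M : Type v) [AddCommGroup M] [Module R M]
    (hproj : ∀ N : Submodule R M, IsAProjective R A N)
    (hM : IsAC3 R A M) :
    ∀ N : Submodule R M, A N →
      (∃ D : Submodule R M, IsSummand D ∧ Nonempty (N ≃ₗ[R] D)) →
      IsSummand N := by
  intro N hN hD
  have := hart N hN
  exact hM.isSummand_of_isArtinian hiso hsum hart hproj N ⟨N, Set.mem_Iic.2 le_rfl⟩ hN hD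
end

section
/- Let Q be a quasi-injective right R-module. If X₁, …, Xₙ are semisimple submodules of Q that are each direct summands of Q, then X₁ + ⋯ + Xₙ is a direct summand of Q. -/
universe u v

/-!
Maps into a summand of a quasi-injective module `Q` extend from submodules of `Q`, hence so do
maps into a product `X × Y` of summands. If `X ⊓ Y = ⊥`, then `X × Y ≅ X ⊔ Y`, and extending the
inverse of this isomorphism gives a projection of `Q` onto `X ⊔ Y`, so `X ⊔ Y` is a summand.
For a semisimple summand `Y` and a summand `S`, write `Y = (S ⊓ Y) ⊕ B`; then `B` is a summand of
`Q` disjoint from `S` with `S ⊔ B = S ⊔ Y`. Induction on the number of summands finishes.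
-/

namespace IsInjectiveFor

variable {R : Type u} [Ring R] {K N N' : Type v} [AddCommGroup K] [Module R K]
  [AddCommGroup N] [Module R N] [AddCommGroup N'] [Module R N']

lemma submodule_of_isSummand (h : IsInjectiveFor R K N) {X : Submodule R N} (hX : IsSummand X) :
    IsInjectiveFor R K X := fun A f ↦ by
  obtain ⟨X', hXX'⟩ := hX
  obtain ⟨g, hg⟩ := h A (X.subtype ∘ₗ f)
  exact ⟨X.projectionOnto X' hXX' ∘ₗ g, fun a ↦ by simp [hg, Submodule.projectionOnto_apply_left]⟩

lemma prod (h : IsInjectiveFor R K N) (h' : IsInjectiveFor R K N') :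
    IsInjectiveFor R K (N × N') := fun A f ↦ by
  obtain ⟨g, hg⟩ := h A (LinearMap.fst R N N' ∘ₗ f)
  obtain ⟨g', hg'⟩ := h' A (LinearMap.snd R N N' ∘ₗ f)
  exact ⟨g.prod g', fun a ↦ Prod.ext (hg a) (hg' a)⟩

lemma isSummand_range (h : IsInjectiveFor R K N) {f : N →ₗ[R] K} (hf : Function.Injective f) :
    IsSummand (LinearMap.range f) := by
  obtain ⟨g, hg⟩ := h _ (LinearEquiv.ofInjective f hf).symm.toLinearMap
  let p : K →ₗ[R] LinearMap.range f :=
    (f ∘ₗ g).codRestrict _ fun x ↦ LinearMap.mem_range_self f (g x)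
  exact ⟨_, LinearMap.isCompl_of_proj (f := p) fun x ↦ by ext; simp [p, hg]⟩

end IsInjectiveFor

section QuasiInjective

variable {R : Type u} [Ring R] {Q : Type v} [AddCommGroup Q] [Module R Q]

lemma IsSummand.left_of_sup {B C : Submodule R Q} (h : IsSummand (B ⊔ C)) (hBC : Disjoint B C) :
    IsSummand B := by
  obtain ⟨D, hD⟩ := h
  exact ⟨C ⊔ D, hBC.isCompl_sup_right_of_isCompl_sup_left hD⟩

lemma isSummand_sup_of_disjoint (hQ : IsInjectiveFor R Q Q) {X Y : Submodule R Q}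
    (hX : IsSummand X) (hY : IsSummand Y) (hXY : Disjoint X Y) : IsSummand (X ⊔ Y) := by
  have hinj : Function.Injective (X.subtype.coprod Y.subtype) := by
    rw [← LinearMap.ker_eq_bot, LinearMap.ker_coprod_of_disjoint_range] <;> simp [hXY]
  simpa [LinearMap.range_coprod] using
    ((hQ.submodule_of_isSummand hX).prod (hQ.submodule_of_isSummand hY)).isSummand_range hinj

lemma isSummand_sup_of_isSemisimpleModule (hQ : IsInjectiveFor R Q Q) {S Y : Submodule R Q}
    (hS : IsSummand S) (hY : IsSummand Y) [IsSemisimpleModule R Y] : IsSummand (S ⊔ Y) := by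
  have := Y.mapIic.complementedLattice_iff.1 inferInstance
  obtain ⟨B, hB⟩ := exists_isCompl (⟨S ⊓ Y, Set.mem_Iic.2 inf_le_right⟩ : Set.Iic Y)
  obtain ⟨hdisj, hsup⟩ := Set.Iic.isCompl_iff.1 hB
  have hSB : Disjoint S B := by
    rwa [disjoint_iff, inf_assoc, inf_eq_right.2 (Set.mem_Iic.1 B.2), ← disjoint_iff] at hdisj
  have hB : IsSummand (B : Submodule R Q) :=
    (show IsSummand ((B : Submodule R Q) ⊔ (S ⊓ Y)) by rwa [sup_comm, hsup]).left_of_sup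
      hdisj.symm
  rw [← hsup, ← sup_assoc, sup_inf_self]
  exact isSummand_sup_of_disjoint hQ hS hB hSB

lemma isSummand_finset_sup (hQ : IsInjectiveFor R Q Q) {ι : Type*} (X : ι → Submodule R Q)
    (hss : ∀ i, IsSemisimpleModule R (X i)) (hsum : ∀ i, IsSummand (X i)) (s : Finset ι) :
    IsSummand (s.sup X) := by
  classical
  induction s using Finset.induction_on with
  | empty => exact ⟨⊤, isCompl_bot_top⟩
  | insert i s _ ih =>
    rw [Finset.sup_insert, sup_comm]
    exact isSummand_sup_of_isSemisimpleModule hQ ih (hsum i)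

end QuasiInjective

theorem quasiInjective_sum_semisimple_summands {R : Type u} [Ring R]
    (Q : Type v) [AddCommGroup Q] [Module R Q]
    (hQ : IsInjectiveFor R Q Q)
    (n : ℕ) (X : Fin n → Submodule R Q)
    (hss : ∀ i, IsSemisimpleModule R (X i))
    (hsum : ∀ i, IsSummand (X i)) :
    IsSummand (⨆ i, X i) := by
  rw [← Finset.sup_univ_eq_iSup]
  exact isSummand_finset_sup hQ X hss hsum _
end

section
/- Let P be a quasi-projective right R-module. If X₁, …, Xₙ are direct summands of P such that each factor P/Xᵢ is semisimple, then X₁ ∩ ⋯ ∩ Xₙ is a direct summand of P. -/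
universe u v

/-!
Reduce to two summands `A`, `B` with `P/A` semisimple. Semisimplicity of `P/A` gives `W ⊇ A`
complementing `A + B` above `A`; then `W` is again a summand, `W + B = P` and `W ∩ B = A ∩ B`.
For a summand `W` with `W + B = P`, quasi-projectivity lifts `P → W → P/B` along `P → P/B`,
and correcting the projection onto `W` by this lift gives a projection whose kernel lies in `B`.
So `W` has a complement inside `B`, which makes `W ∩ B` a summand of `B`, hence of `P`.
-/

section ModularLattice

variable {α : Type*} [Lattice α] [BoundedOrder α] [IsModularLattice α]

theorem IsCompl.isCompl_sup_of_le {b b' w d : α} (hb : IsCompl b b') (hwb : w ≤ b)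
    (hwd : w ⊓ d = ⊥) (hwdb : w ⊔ d = b) : IsCompl w (d ⊔ b') := by
  have hdb : d ≤ b := hwdb ▸ le_sup_right
  constructor
  · rw [disjoint_iff, ← inf_eq_left.2 hwb, inf_assoc, inf_comm b, sup_inf_assoc_of_le _ hdb,
      hb.symm.inf_eq_bot, sup_bot_eq, hwd]
  · rw [codisjoint_iff, ← sup_assoc, hwdb, hb.sup_eq_top]

theorem IsCompl.isCompl_inf_of_le {a a' w c : α} (ha : IsCompl a a') (haw : a ≤ w)
    (hwc : w ⊔ c = ⊤) (hwca : w ⊓ c = a) : IsCompl w (c ⊓ a') :=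
  (IsCompl.isCompl_sup_of_le (α := αᵒᵈ) ha.dual haw hwc hwca).ofDual

end ModularLattice

section

variable {R : Type u} [Ring R] {P : Type v} [AddCommGroup P] [Module R P]

theorem exists_inf_eq_sup_eq_top_of_isSemisimpleModule_quotient {A C : Submodule R P}
    [IsSemisimpleModule R (P ⧸ A)] (hAC : A ≤ C) : ∃ W, A ≤ W ∧ W ⊔ C = ⊤ ∧ W ⊓ C = A := by
  obtain ⟨T, hT⟩ := exists_isCompl (C.map A.mkQ)
  have hAW : A ≤ T.comap A.mkQ := by
    simpa using Submodule.comap_mono (f := A.mkQ) (bot_le : ⊥ ≤ T)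
  refine ⟨T.comap A.mkQ, hAW, ?_, le_antisymm ?_ (le_inf hAW hAC)⟩
  · rw [← sup_eq_right.2 (le_sup_of_le_left hAW), ← Submodule.map_mkQ_eq_top, Submodule.map_sup,
      Submodule.map_comap_eq_of_surjective A.mkQ_surjective, hT.symm.sup_eq_top]
  · calc T.comap A.mkQ ⊓ C ≤ (T ⊓ C.map A.mkQ).comap A.mkQ :=
          Submodule.comap_inf T _ A.mkQ ▸ inf_le_inf_left _ (Submodule.le_comap_map _ _)
      _ = A := by rw [hT.symm.inf_eq_bot, Submodule.comap_bot, Submodule.ker_mkQ]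

theorem exists_isCompl_le_of_forall_sub_mem {W V B : Submodule R P} (hWV : IsCompl W V)
    (F : P →ₗ[R] W) (hF : ∀ x, x - F x ∈ B) : ∃ D ≤ B, IsCompl W D := by
  let π := W.projectionOnto V hWV
  let f : P →ₗ[R] W := π + F ∘ₗ (LinearMap.id - W.subtype ∘ₗ π)
  have hf : ∀ w : W, f w = w := fun w => by
    simp [f, π, Submodule.projectionOnto_apply_left]
  refine ⟨LinearMap.ker f, fun x hx => ?_, LinearMap.isCompl_of_proj hf⟩
  have hsub : x - f x = (x - π x) - F (x - π x) := by
    simp only [f, LinearMap.add_apply, LinearMap.comp_apply, LinearMap.sub_apply, map_sub,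
      Submodule.coe_add, Submodule.coe_sub, LinearMap.id_apply, Submodule.subtype_apply]
    abel
  have hxB : x - f x ∈ B := hsub ▸ hF _
  rwa [LinearMap.mem_ker.1 hx, ZeroMemClass.coe_zero, sub_zero] at hxB

theorem IsProjectiveFor.exists_forall_sub_mem (hP : IsProjectiveFor R P P) {W V B : Submodule R P}
    (hWV : IsCompl W V) (hWB : W ⊔ B = ⊤) : ∃ F : P →ₗ[R] W, ∀ x, x - F x ∈ B := by
  let π := W.projectionOnto V hWV
  have hsurj : Function.Surjective (B.mkQ ∘ₗ W.subtype ∘ₗ π) := by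
    rw [← LinearMap.range_eq_top, LinearMap.range_comp, LinearMap.range_comp,
      Submodule.range_projectionOnto, Submodule.map_top, Submodule.range_subtype,
      Submodule.map_mkQ_eq_top, sup_comm, hWB]
  obtain ⟨h, hh⟩ := hP _ _ B.mkQ hsurj
  refine ⟨π ∘ₗ h, fun x => ?_⟩
  rw [← Submodule.Quotient.mk_eq_zero, Submodule.Quotient.mk_sub]
  simpa [sub_eq_zero] using (LinearMap.congr_fun hh x).symm

theorem IsProjectiveFor.isSummand_inf_of_sup_eq_top (hP : IsProjectiveFor R P P)
    {W B : Submodule R P} (hW : IsSummand W) (hB : IsSummand B) (hWB : W ⊔ B = ⊤) :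
    IsSummand (W ⊓ B) := by
  obtain ⟨V, hWV⟩ := hW
  obtain ⟨B', hBB'⟩ := hB
  obtain ⟨F, hF⟩ := hP.exists_forall_sub_mem hWV hWB
  obtain ⟨D, hDB, hWD⟩ := exists_isCompl_le_of_forall_sub_mem hWV F hF
  refine ⟨D ⊔ B', hBB'.isCompl_sup_of_le inf_le_right ?_ ?_⟩
  · rw [inf_right_comm, hWD.inf_eq_bot, bot_inf_eq]
  · rw [sup_comm, ← sup_inf_assoc_of_le _ hDB, sup_comm, hWD.sup_eq_top, top_inf_eq]

theorem IsProjectiveFor.isSummand_inf (hP : IsProjectiveFor R P P) {A B : Submodule R P}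
    (hA : IsSummand A) (hB : IsSummand B) [IsSemisimpleModule R (P ⧸ A)] :
    IsSummand (A ⊓ B) := by
  obtain ⟨A', hAA'⟩ := hA
  obtain ⟨W, hAW, hsup, hinf⟩ :=
    exists_inf_eq_sup_eq_top_of_isSemisimpleModule_quotient (le_sup_left : A ≤ A ⊔ B)
  have hW : IsSummand W := ⟨_, hAA'.isCompl_inf_of_le hAW hsup hinf⟩
  have hWsupB : W ⊔ B = ⊤ := by rwa [← sup_assoc, sup_eq_left.2 hAW] at hsup
  have hWinfB : W ⊓ B = A ⊓ B := by
    rw [← hinf, inf_assoc, inf_eq_right.2 (le_sup_right : B ≤ A ⊔ B)]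
  exact hWinfB ▸ hP.isSummand_inf_of_sup_eq_top hW hB hWsupB

end

theorem quasiProjective_inter_summands {R : Type u} [Ring R]
    (P : Type v) [AddCommGroup P] [Module R P]
    (hP : IsProjectiveFor R P P)
    (n : ℕ) (X : Fin n → Submodule R P)
    (hss : ∀ i, IsSemisimpleModule R (P ⧸ X i))
    (hsum : ∀ i, IsSummand (X i)) :
    IsSummand (⨅ i, X i) := by
  rw [← Finset.inf_univ_eq_iInf]
  induction (Finset.univ : Finset (Fin n)) using Finset.induction_on with
  | empty => exact ⟨⊥, isCompl_top_bot⟩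
  | insert i s _ ih =>
    rw [Finset.inf_insert]
    exact hP.isSummand_inf (hsum i) ih
end

section
/- For a right R-module M, the following are equivalent: (1) for any simple submodules A, B of M with A ≅ B and B a direct summand of M, A is a direct summand of M; (2) for any simple direct summands A, B of M with A ∩ B = 0, A ⊕ B is a direct summand of M. -/
universe u v

/-!
(1) ⇒ (2): write `M = B ⊕ C` and project `A` onto `C` along `B`. As `A ∩ B = 0`, the image `A'`
is isomorphic to `A`, hence a summand by (1); since `A' ≤ C` it is a summand of `C`, so
`A ⊕ B = A' ⊕ B` is a summand of `B ⊕ C = M`.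

(2) ⇒ (1): write `M = B ⊕ C` and let `A ≅ B`. If `A ⊄ C`, then `A` is already a complement of `C`.
If `A ≤ C`, the graph `D = {b + σ b}` of an isomorphism `σ : B → A` is a simple complement of `C`
meeting `B` trivially, so by (2) `D ⊕ B = A ⊕ B` is a summand, and hence so is `A`.
-/

section Lattice

variable {α : Type*} [Lattice α] [BoundedOrder α] [IsModularLattice α] {a b c d : α}

theorem IsCompl.isCompl_sup_inf_of_le (hbc : IsCompl b c) (hac : a ≤ c) (had : IsCompl a d) :
    IsCompl (a ⊔ b) (d ⊓ c) := by
  have hcompl : IsCompl b (a ⊔ d ⊓ c) := by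
    rwa [← sup_inf_assoc_of_le d hac, had.sup_eq_top, top_inf_eq]
  rw [sup_comm]
  exact (had.disjoint.mono_right inf_le_left).isCompl_sup_left_of_isCompl_sup_right hcompl

/-- The atom `b` lies below `a ⊔ c`: otherwise `(a ⊔ c) ⊓ b = ⊥`, and modularity gives
`a ⊔ c = c`. -/
theorem IsCompl.isCompl_of_isAtom_of_not_le (hbc : IsCompl b c) (ha : IsAtom a) (hb : IsAtom b)
    (hac : ¬ a ≤ c) : IsCompl a c := by
  refine ⟨ha.not_le_iff_disjoint.mp hac, codisjoint_iff_le_sup.mpr ?_⟩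
  rcases hb.le_iff.mp (inf_le_right : (a ⊔ c) ⊓ b ≤ b) with hbot | hle
  · refine absurd ?_ hac
    calc a ≤ a ⊔ c := le_sup_left
      _ = (a ⊔ c) ⊓ (b ⊔ c) := by rw [hbc.sup_eq_top, inf_top_eq]
      _ = c := by
        rw [inf_comm, sup_comm b, sup_inf_assoc_of_le b le_sup_right, inf_comm, hbot, sup_bot_eq]
  · rw [← hbc.sup_eq_top]
    exact sup_le (inf_eq_right.mp hle) le_sup_right

end Lattice

namespace Submodule

variable {R : Type u} [Ring R] {M : Type v} [AddCommGroup M] [Module R M]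
  {N : Type*} [AddCommGroup N] [Module R N]

noncomputable def equivMapOfDisjointKer (f : M →ₗ[R] N) {A : Submodule R M}
    (h : Disjoint A (LinearMap.ker f)) : A ≃ₗ[R] A.map f :=
  (LinearEquiv.ofInjective _ (LinearMap.injective_domRestrict_iff.mpr h)).trans
    (LinearEquiv.ofEq _ _ (LinearMap.range_domRestrict A f))

theorem map_projection_sup_eq {B C : Submodule R M} (h : IsCompl C B) (A : Submodule R M) :
    A.map (C.projection B h) ⊔ B = A ⊔ B := by
  refine le_antisymm (sup_le ?_ le_sup_right) (sup_le ?_ le_sup_right)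
  · rintro _ ⟨x, hx, rfl⟩
    simpa using sub_mem (mem_sup_left hx) (mem_sup_right (sub_projection_mem h x))
  · intro x hx
    rw [← sub_add_cancel x (C.projection B h x)]
    exact add_mem (mem_sup_right (sub_projection_mem h x)) (mem_sup_left (mem_map_of_mem hx))

section Graph

variable {B C : Submodule R M} (σ : B →ₗ[R] M)

theorem range_subtype_add_sup :
    LinearMap.range (B.subtype + σ) ⊔ B = LinearMap.range σ ⊔ B := by
  refine le_antisymm (sup_le ?_ le_sup_right) (sup_le ?_ le_sup_right)
  · rintro _ ⟨b, rfl⟩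
    exact add_mem (mem_sup_right b.2) (mem_sup_left ⟨b, rfl⟩)
  · rintro _ ⟨b, rfl⟩
    have : σ b = (B.subtype + σ) b - b := by simp
    rw [this]
    exact sub_mem (mem_sup_left ⟨b, rfl⟩) (mem_sup_right b.2)

variable {σ}

theorem injective_subtype_add (hBC : Disjoint B C) (hσ : LinearMap.range σ ≤ C) :
    Function.Injective (B.subtype + σ) := by
  refine (injective_iff_map_eq_zero _).mpr fun b hb => ?_
  have hbC : (b : M) ∈ C := by
    rw [eq_neg_of_add_eq_zero_left (by simpa using hb : (b : M) + σ b = 0)]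
    exact neg_mem (hσ ⟨b, rfl⟩)
  exact Subtype.ext ((disjoint_def.mp hBC) b b.2 hbC)

theorem disjoint_range_subtype_add (hBC : Disjoint B C) (hσ : LinearMap.range σ ≤ C)
    (hinj : Function.Injective σ) : Disjoint (LinearMap.range (B.subtype + σ)) B := by
  refine disjoint_def.mpr ?_
  rintro _ ⟨b, rfl⟩ hB
  have hσB : σ b ∈ B := by
    have : σ b = (B.subtype + σ) b - b := by simp
    rw [this]
    exact sub_mem hB b.2
  have : b = 0 := hinj (by rw [map_zero]; exact (disjoint_def.mp hBC) _ hσB (hσ ⟨b, rfl⟩))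
  simp [this]

theorem isCompl_range_subtype_add (hBC : IsCompl B C) (hσ : LinearMap.range σ ≤ C) :
    IsCompl (LinearMap.range (B.subtype + σ)) C := by
  refine ⟨disjoint_def.mpr ?_, codisjoint_iff_le_sup.mpr fun x _ => ?_⟩
  · rintro _ ⟨b, rfl⟩ hC
    have hbC : (b : M) ∈ C := by
      have : (b : M) = (B.subtype + σ) b - σ b := by simp
      rw [this]
      exact sub_mem hC (hσ ⟨b, rfl⟩)
    have : b = 0 := Subtype.ext ((disjoint_def.mp hBC.disjoint) b b.2 hbC)
    simp [this]
  · obtain ⟨b, c, hc, rfl⟩ : ∃ (b : B) (c : M), c ∈ C ∧ x = b + c := by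
      obtain ⟨b, hb, c, hc, rfl⟩ := mem_sup.mp (hBC.sup_eq_top ▸ mem_top : x ∈ B ⊔ C)
      exact ⟨⟨b, hb⟩, c, hc, rfl⟩
    have : (b : M) + c = (B.subtype + σ) b + (c - σ b) := by simp
    rw [this]
    exact add_mem (mem_sup_left ⟨b, rfl⟩) (mem_sup_right (sub_mem hc (hσ ⟨b, rfl⟩)))

end Graph

end Submodule

open Submodule in
theorem simple_direct_injective_iff {R : Type u} [Ring R]
    (M : Type v) [AddCommGroup M] [Module R M] :
    (∀ A B : Submodule R M, IsSimpleModule R A → IsSimpleModule R B →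
        Nonempty (A ≃ₗ[R] B) → IsSummand B → IsSummand A) ↔
      (∀ A B : Submodule R M, IsSimpleModule R A → IsSimpleModule R B →
        IsSummand A → IsSummand B → A ⊓ B = ⊥ → IsSummand (A ⊔ B)) := by
  constructor
  · intro h1 A B hA hB hsA ⟨C, hBC⟩ hAB
    set p := C.projection B hBC.symm
    let e := equivMapOfDisjointKer p (by rw [ker_projection]; exact disjoint_iff.mpr hAB)
    have hA' : IsSimpleModule R (A.map p) := IsSimpleModule.congr e.symm
    obtain ⟨D, hD⟩ := h1 _ A hA' hA ⟨e.symm⟩ hsA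
    have hle : A.map p ≤ C := LinearMap.map_le_range.trans (range_projection hBC.symm).le
    rw [← map_projection_sup_eq hBC.symm A]
    exact ⟨_, hBC.isCompl_sup_inf_of_le hle hD⟩
  · intro h2 A B hA hB ⟨e⟩ ⟨C, hBC⟩
    by_cases hAC : A ≤ C
    · set σ := A.subtype ∘ₗ e.symm.toLinearMap
      have hσ : LinearMap.range σ = A := by simp [σ, LinearMap.range_comp]
      have hσC : LinearMap.range σ ≤ C := hσ ▸ hAC
      have hσinj : Function.Injective σ := A.injective_subtype.comp e.symm.injective
      have hD : IsSimpleModule R (LinearMap.range (B.subtype + σ)) := IsSimpleModule.congr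
        (LinearEquiv.ofInjective _ (injective_subtype_add hBC.disjoint hσC)).symm
      obtain ⟨E, hE⟩ := h2 _ B hD hB ⟨C, isCompl_range_subtype_add hBC hσC⟩ ⟨C, hBC⟩
        (disjoint_range_subtype_add hBC.disjoint hσC hσinj).eq_bot
      rw [range_subtype_add_sup, hσ] at hE
      exact ⟨_, (hBC.disjoint.symm.mono_left hAC).isCompl_sup_right_of_isCompl_sup_left hE⟩
    · exact ⟨C, hBC.isCompl_of_isAtom_of_not_le (isSimpleModule_iff_isAtom.mp hA)
        (isSimpleModule_iff_isAtom.mp hB) hAC⟩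
end

section
/- Let A be a class of right R-modules closed under isomorphisms and direct summands. Then every module in A is injective if and only if every right R-module is an A-C3 module. -/
universe u v

/-!
If every module in `A` is injective, then for disjoint `X, Y ∈ A` the submodule `X ⊔ Y ≅ X × Y`
is injective and hence a direct summand.

Conversely, let `K ∈ A` and let `β : K → Q` be an embedding. In `K × Q` the submodules `K × 0`
and `graph β` are direct summands (both complemented by `0 × Q`), isomorphic to `K` and meeting in
`0`; by the `A`-C3 property of `K × Q` their sum `K × β(K)` is a summand, so `β` splits. A module
all of whose embeddings split is injective: to extend `g : X → K` along `f : X ↪ N`, split the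
embedding of `K` into the pushout of `f` and `g`.
-/

open LinearMap

section

variable {R : Type u} [Ring R]

namespace Module.Injective

theorem of_linearEquiv {M N : Type v} [AddCommGroup M] [Module R M] [AddCommGroup N]
    [Module R N] [Module.Injective R M] (e : M ≃ₗ[R] N) : Module.Injective R N := by
  refine ⟨fun X Y _ _ _ _ f hf g => ?_⟩
  obtain ⟨h, hh⟩ := Module.Injective.out f hf (e.symm.toLinearMap ∘ₗ g)
  exact ⟨e.toLinearMap ∘ₗ h, fun x => by simp [hh]⟩

instance prod {M N : Type v} [AddCommGroup M] [Module R M] [AddCommGroup N] [Module R N]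
    [Module.Injective R M] [Module.Injective R N] : Module.Injective R (M × N) := by
  refine ⟨fun X Y _ _ _ _ f hf g => ?_⟩
  obtain ⟨h₁, hh₁⟩ := Module.Injective.out f hf (fst R M N ∘ₗ g)
  obtain ⟨h₂, hh₂⟩ := Module.Injective.out f hf (snd R M N ∘ₗ g)
  exact ⟨h₁.prod h₂, fun x => Prod.ext (hh₁ x) (hh₂ x)⟩

end Module.Injective

section Summands

variable {M N : Type v} [AddCommGroup M] [Module R M] [AddCommGroup N] [Module R N]

theorem Submodule.isSummand_of_injective (X : Submodule R M) [Module.Injective R X] :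
    IsSummand X := by
  obtain ⟨s, hs⟩ := Module.Injective.out X.subtype X.injective_subtype LinearMap.id
  exact ⟨_, isCompl_of_proj hs⟩

noncomputable def Submodule.prodEquivSupOfDisjoint {X Y : Submodule R M} (h : Disjoint X Y) :
    (X × Y) ≃ₗ[R] ↥(X ⊔ Y) := by
  refine (LinearEquiv.ofInjective (X.subtype.coprod Y.subtype) ?_).trans
    (LinearEquiv.ofEq _ _ (Submodule.sup_eq_range X Y).symm)
  rw [← ker_eq_bot, ker_coprod_of_disjoint_range, Submodule.ker_subtype, Submodule.ker_subtype,
    Submodule.prod_bot]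
  rwa [Submodule.range_subtype, Submodule.range_subtype]

theorem IsSummand.of_top_prod {S : Submodule R N}
    (h : IsSummand ((⊤ : Submodule R M).prod S)) : IsSummand S := by
  obtain ⟨C, hC⟩ := h
  refine ⟨C.map (snd R M N), ?_, ?_⟩
  · rw [disjoint_iff, eq_bot_iff]
    rintro _ ⟨hS, c, hc, rfl⟩
    have hc0 : c ∈ (⊤ : Submodule R M).prod S ⊓ C := ⟨⟨trivial, hS⟩, hc⟩
    rw [hC.inf_eq_bot, Submodule.mem_bot] at hc0
    simp [hc0]
  · rw [codisjoint_iff, eq_top_iff]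
    intro n _
    obtain ⟨t, ht, c, hc, htc⟩ :=
      Submodule.mem_sup.1 (hC.sup_eq_top ▸ Submodule.mem_top : ((0 : M), n) ∈ _ ⊔ C)
    exact Submodule.mem_sup.2 ⟨t.2, ht.2, c.2, ⟨c, hc, rfl⟩, congrArg Prod.snd htc⟩

theorem exists_leftInverse_of_isSummand_range {f : M →ₗ[R] N} (hf : Function.Injective f)
    (h : IsSummand (range f)) : ∃ r : N →ₗ[R] M, r ∘ₗ f = LinearMap.id := by
  obtain ⟨C, hC⟩ := h
  refine ⟨(LinearEquiv.ofInjective f hf).symm.toLinearMap ∘ₗ (range f).projectionOnto C hC, ?_⟩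
  ext m
  rw [comp_apply, comp_apply, Submodule.projectionOnto_apply_of_mem_left hC (mem_range_self f m),
    LinearEquiv.coe_coe, LinearEquiv.symm_apply_eq]
  rfl

end Summands

section Graph

variable {M N : Type v} [AddCommGroup M] [Module R M] [AddCommGroup N] [Module R N]
  (f : M →ₗ[R] N)

theorem LinearMap.isCompl_graph_range_inr : IsCompl f.graph (range (inr R M N)) := by
  refine ⟨?_, ?_⟩
  · rw [disjoint_iff, eq_bot_iff]
    rintro _ ⟨hx, n, rfl⟩
    simp_all
  · rw [codisjoint_iff, eq_top_iff]
    rintro ⟨m, n⟩ -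
    have hsplit : (m, n) = (m, f m) + inr R M N (n - f m) := by simp
    rw [hsplit]
    exact Submodule.add_mem_sup (by simp) (mem_range_self _ _)

theorem LinearMap.disjoint_range_inl_graph (hf : Function.Injective f) :
    Disjoint (range (inl R M N)) f.graph := by
  rw [disjoint_iff, eq_bot_iff]
  rintro _ ⟨⟨m, rfl⟩, hm⟩
  have : m = 0 := hf (by simpa [eq_comm] using hm)
  simp [this]

theorem LinearMap.range_inl_sup_graph :
    range (inl R M N) ⊔ f.graph = (⊤ : Submodule R M).prod (range f) := by
  apply le_antisymm
  · refine sup_le ?_ ?_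
    · rintro _ ⟨m, rfl⟩
      exact ⟨trivial, zero_mem _⟩
    · rintro ⟨m, n⟩ (hn : n = f m)
      exact ⟨trivial, hn ▸ mem_range_self f m⟩
  · rintro ⟨m, _⟩ ⟨-, m', rfl⟩
    have hsplit : (m, f m') = inl R M N (m - m') + (m', f m') := by simp
    rw [hsplit]
    exact Submodule.add_mem_sup (mem_range_self _ _) rfl

end Graph

theorem isAC3_of_forall_injective (A : (N : Type v) → [AddCommGroup N] → [Module R N] → Prop)
    (hA : ∀ (N : Type v) [AddCommGroup N] [Module R N], A N → Module.Injective R N)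
    (M : Type v) [AddCommGroup M] [Module R M] : IsAC3 R A M := by
  intro X Y hX hY _ _ hXY
  have := hA X hX
  have := hA Y hY
  have : Module.Injective R ↥(X ⊔ Y) :=
    .of_linearEquiv (Submodule.prodEquivSupOfDisjoint (disjoint_iff.2 hXY))
  exact (X ⊔ Y).isSummand_of_injective

theorem IsAC3.exists_leftInverse
    {A : (N : Type v) → [AddCommGroup N] → [Module R N] → Prop} (hiso : ClosedUnderIso R A)
    {K Q : Type v} [AddCommGroup K] [Module R K] [AddCommGroup Q] [Module R Q] (hK : A K)
    (hKQ : IsAC3 R A (K × Q)) {β : K →ₗ[R] Q} (hβ : Function.Injective β) :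
    ∃ r : Q →ₗ[R] K, r ∘ₗ β = LinearMap.id := by
  have hA_inl : A (range (inl R K Q)) :=
    hiso _ _ (LinearEquiv.ofInjective _ inl_injective) hK
  have hA_graph : A β.graph :=
    hiso _ _ ((LinearEquiv.ofInjective (LinearMap.id.prod β) fun _ _ h => congrArg Prod.fst h).trans
      (LinearEquiv.ofEq _ _ β.graph_eq_range_prod.symm)) hK
  have hsum := hKQ _ _ hA_inl hA_graph ⟨_, isCompl_range_inl_inr⟩
    ⟨_, β.isCompl_graph_range_inr⟩ (β.disjoint_range_inl_graph hβ).eq_bot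
  rw [β.range_inl_sup_graph] at hsum
  exact exists_leftInverse_of_isSummand_range hβ hsum.of_top_prod

theorem Module.injective_of_forall_exists_leftInverse {K : Type v} [AddCommGroup K] [Module R K]
    (h : ∀ (Q : Type v) [AddCommGroup Q] [Module R Q] (β : K →ₗ[R] Q),
      Function.Injective β → ∃ r : Q →ₗ[R] K, r ∘ₗ β = LinearMap.id) :
    Module.Injective R K := by
  refine ⟨fun X N _ _ _ _ f hf g => ?_⟩
  let W : Submodule R (N × K) := range (f.prod (-g))
  let ι : N →ₗ[R] (N × K) ⧸ W := W.mkQ ∘ₗ inl R N K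
  let β : K →ₗ[R] (N × K) ⧸ W := W.mkQ ∘ₗ inr R N K
  have hcomm : ∀ x, ι (f x) = β (g x) := by
    intro x
    simp only [ι, β, comp_apply, Submodule.mkQ_apply, Submodule.Quotient.eq]
    exact ⟨x, by simp⟩
  have hβ : Function.Injective β := by
    rw [← ker_eq_bot, eq_bot_iff]
    intro k hk
    obtain ⟨x, hx⟩ := (Submodule.Quotient.mk_eq_zero W).1 hk
    have hx0 : x = 0 := hf (by simpa using congrArg Prod.fst hx)
    simpa [hx0] using (congrArg Prod.snd hx).symm
  obtain ⟨r, hr⟩ := h _ β hβ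
  exact ⟨r ∘ₗ ι, fun x => by rw [comp_apply, hcomm, ← comp_apply, hr, id_apply]⟩

end

theorem all_A_injective_iff_all_AC3_general {R : Type u} [Ring R]
    (A : (N : Type v) → [AddCommGroup N] → [Module R N] → Prop)
    (hiso : ClosedUnderIso R A) :
    (∀ (N : Type v) [AddCommGroup N] [Module R N], A N → Module.Injective R N) ↔
      (∀ (M : Type v) [AddCommGroup M] [Module R M], IsAC3 R A M) :=
  ⟨fun hinj => isAC3_of_forall_injective A hinj, fun hAC3 _ _ _ hK =>
    Module.injective_of_forall_exists_leftInverse fun _ _ _ _ hβ =>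
      (hAC3 _).exists_leftInverse hiso hK hβ⟩

theorem all_A_injective_iff_all_AC3 {R : Type u} [Ring R]
    (A : (N : Type v) → [AddCommGroup N] → [Module R N] → Prop)
    (hiso : ClosedUnderIso R A) (hsum : ClosedUnderSummands R A) :
    (∀ (N : Type v) [AddCommGroup N] [Module R N], A N → Module.Injective R N) ↔
      (∀ (M : Type v) [AddCommGroup M] [Module R M], IsAC3 R A M) :=
  all_A_injective_iff_all_AC3_general A hiso
end

section
/- Let A be a class of right R-modules with local endomorphism rings, closed under isomorphisms. If M and K are indecomposable right R-modules neither of which lies in A, then N = M ⊕ K has no nonzero direct summand belonging to A; in particular N is both an A-D3 module and an A-C3 module. -/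
/-! A nonzero summand `S` of `M × K` that lies in `A` has a local endomorphism ring. The identity
of `S` is the sum of its composites through `M` and through `K`, so one of them is a unit and `S`
is a retract of `M` or of `K`; indecomposability then makes `S` isomorphic to `M` or `K`,
neither of which lies in `A`. A module with no nonzero summand in `A` is `A`-C3 and `A`-D3 for
trivial reasons: the summands in the C3 condition are `0`, and in the D3 condition their
complements, being isomorphic to the quotients in `A`, are `0`. -/

universe u v

def IsLinearRetract (R : Type u) [Ring R] (S : Type v) [AddCommGroup S] [Module R S]
    (M : Type v) [AddCommGroup M] [Module R M] : Prop :=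
  ∃ (f : S →ₗ[R] M) (g : M →ₗ[R] S), g ∘ₗ f = LinearMap.id

section Retract

variable {R : Type u} [Ring R] {S M K : Type v} [AddCommGroup S] [Module R S]
  [AddCommGroup M] [Module R M] [AddCommGroup K] [Module R K]

theorem IsSummand.isLinearRetract {X : Submodule R M} (hX : IsSummand X) :
    IsLinearRetract R X M := by
  obtain ⟨Y, hXY⟩ := hX
  exact ⟨X.subtype, X.projectionOnto Y hXY,
    LinearMap.ext fun x => Submodule.projectionOnto_apply_left hXY x⟩

theorem IsLinearRetract.of_isUnit_comp {f : S →ₗ[R] M} {g : M →ₗ[R] S}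
    (hgf : IsUnit (g ∘ₗ f : Module.End R S)) : IsLinearRetract R S M :=
  ⟨f, (↑hgf.unit⁻¹ : Module.End R S) ∘ₗ g, hgf.val_inv_mul⟩

theorem IsLinearRetract.left_or_right_of_prod [IsLocalRing (Module.End R S)]
    (h : IsLinearRetract R S (M × K)) : IsLinearRetract R S M ∨ IsLinearRetract R S K := by
  obtain ⟨f, g, hgf⟩ := h
  have hsum : ((g ∘ₗ LinearMap.inl R M K) ∘ₗ (LinearMap.fst R M K ∘ₗ f) : Module.End R S) +
      (g ∘ₗ LinearMap.inr R M K) ∘ₗ (LinearMap.snd R M K ∘ₗ f) = 1 := by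
    rw [Module.End.one_eq_id, ← hgf]
    ext x
    simp [← map_add]
  exact (IsLocalRing.isUnit_or_isUnit_of_add_one hsum).imp
    IsLinearRetract.of_isUnit_comp IsLinearRetract.of_isUnit_comp

theorem Indecomposable'.nonempty_linearEquiv_of_isLinearRetract (hM : Indecomposable' R M)
    [Nontrivial S] (h : IsLinearRetract R S M) : Nonempty (S ≃ₗ[R] M) := by
  obtain ⟨f, g, hgf⟩ := h
  have hleft : Function.LeftInverse g f := LinearMap.congr_fun hgf
  have hidem : IsIdempotentElem (f ∘ₗ g) := LinearMap.ext fun x => congrArg f (hleft (g x))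
  have hrange : LinearMap.range (f ∘ₗ g) = LinearMap.range f :=
    LinearMap.range_comp_of_range_eq_top f (LinearMap.range_eq_top.mpr hleft.surjective)
  rcases hM.2 _ ⟨_, hrange ▸ LinearMap.IsIdempotentElem.isCompl hidem⟩ with hbot | htop
  · obtain ⟨x, hx⟩ := exists_ne (0 : S)
    exact absurd (hleft.injective (by simp [LinearMap.range_eq_bot.mp hbot])) hx
  · exact ⟨.ofBijective f ⟨hleft.injective, LinearMap.range_eq_top.mp htop⟩⟩

end Retract

section NoSummandInClass

variable {R : Type u} [Ring R] {A : (N : Type v) → [AddCommGroup N] → [Module R N] → Prop}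
  {M : Type v} [AddCommGroup M] [Module R M]

theorem eq_bot_of_isSummand_of_forall_not
    (hM : ∀ S : Submodule R M, IsSummand S → S ≠ ⊥ → ¬ A S)
    {X : Submodule R M} (hX : IsSummand X) (hAX : A X) : X = ⊥ := by
  by_contra hne
  exact hM X hX hne hAX

theorem isAC3_of_forall_isSummand_not (hM : ∀ S : Submodule R M, IsSummand S → S ≠ ⊥ → ¬ A S) :
    IsAC3 R A M := by
  intro X Y hAX hAY hX hY _
  rw [eq_bot_of_isSummand_of_forall_not hM hX hAX, eq_bot_of_isSummand_of_forall_not hM hY hAY,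
    sup_idem]
  exact ⟨⊤, isCompl_bot_top⟩

theorem isAD3_of_forall_isSummand_not (hiso : ClosedUnderIso R A)
    (hM : ∀ S : Submodule R M, IsSummand S → S ≠ ⊥ → ¬ A S) : IsAD3 R A M := by
  have htop : ∀ X : Submodule R M, IsSummand X → A (M ⧸ X) → X = ⊤ := by
    rintro X ⟨X', hXX'⟩ hAX
    have hX' : X' = ⊥ := eq_bot_of_isSummand_of_forall_not hM ⟨X, hXX'.symm⟩
      (hiso _ _ (X.quotientEquivOfIsCompl X' hXX') hAX)
    simpa [hX'] using hXX'.codisjoint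
  intro X Y hX hY hAX hAY _
  rw [htop X hX hAX, htop Y hY hAY, inf_idem]
  exact ⟨⊥, isCompl_top_bot⟩

end NoSummandInClass

theorem indecomposable_sum_no_A_summand {R : Type u} [Ring R]
    (A : (N : Type v) → [AddCommGroup N] → [Module R N] → Prop)
    (hiso : ClosedUnderIso R A)
    (hloc : ∀ (N : Type v) [AddCommGroup N] [Module R N], A N → IsLocalRing (Module.End R N))
    (M K : Type v) [AddCommGroup M] [Module R M] [AddCommGroup K] [Module R K]
    (hM : Indecomposable' R M) (hK : Indecomposable' R K)
    (hMA : ¬ A M) (hKA : ¬ A K) :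
    (∀ S : Submodule R (M × K), IsSummand S → S ≠ ⊥ → ¬ A S) ∧
      IsAD3 R A (M × K) ∧ IsAC3 R A (M × K) := by
  have hnone : ∀ S : Submodule R (M × K), IsSummand S → S ≠ ⊥ → ¬ A S := by
    intro S hS hne hAS
    have := hloc S hAS
    have := Submodule.nontrivial_iff_ne_bot.mpr hne
    rcases hS.isLinearRetract.left_or_right_of_prod with hSM | hSK
    · obtain ⟨e⟩ := hM.nonempty_linearEquiv_of_isLinearRetract hSM
      exact hMA (hiso S M e hAS)
    · obtain ⟨e⟩ := hK.nonempty_linearEquiv_of_isLinearRetract hSK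
      exact hKA (hiso S K e hAS)
  exact ⟨hnone, isAD3_of_forall_isSummand_not hiso hnone, isAC3_of_forall_isSummand_not hnone⟩
end

section
/- If M₁ and M₂ are direct summands of a module M with M = M₁ + M₂ and both M/M₁ and M/M₂ projective, then M₁ ∩ M₂ is a direct summand of M. -/
universe u v

/-! Since `M₁ ⊔ M₂ = ⊤`, the map `M → M/M₁ × M/M₂` is surjective, and its kernel is `M₁ ⊓ M₂`.
Its target is projective, so it has a section `s`, and then `M = (M₁ ⊓ M₂) ⊕ range s`. -/

namespace LinearMap

variable {R : Type*} [Ring R] {M N : Type*} [AddCommGroup M] [Module R M]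
  [AddCommGroup N] [Module R N]

theorem isCompl_ker_range_of_comp_eq_id {f : M →ₗ[R] N} {s : N →ₗ[R] M} (h : f ∘ₗ s = id) :
    IsCompl (ker f) (range s) := by
  have hidem : IsIdempotentElem (s ∘ₗ f) := by
    rw [IsIdempotentElem, Module.End.mul_eq_comp, comp_assoc, ← comp_assoc f s f, h, id_comp]
  have hrange : range (s ∘ₗ f) = range s :=
    range_comp_of_range_eq_top s (range_eq_top.2 fun n => ⟨s n, congr($h n)⟩)
  have hker : ker (s ∘ₗ f) = ker f :=
    ker_comp_of_ker_eq_bot f (ker_eq_bot_of_inverse h)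
  simpa only [hrange, hker] using (IsIdempotentElem.isCompl hidem).symm

theorem isSummand_ker_of_surjective [Module.Projective R N] {f : M →ₗ[R] N}
    (hf : Function.Surjective f) : IsSummand (ker f) :=
  have ⟨s, hs⟩ := f.exists_rightInverse_of_surjective (range_eq_top.2 hf)
  ⟨range s, isCompl_ker_range_of_comp_eq_id hs⟩

theorem range_prod_mkQ_eq_top {M₁ M₂ : Submodule R M} (h : M₁ ⊔ M₂ = ⊤) :
    range (M₁.mkQ.prod M₂.mkQ) = ⊤ := by
  rw [range_prod_eq (by rwa [Submodule.ker_mkQ, Submodule.ker_mkQ]), Submodule.range_mkQ,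
    Submodule.range_mkQ, Submodule.prod_top]

end LinearMap

theorem inf_summand_of_projective_quotients_general {R : Type u} [Ring R]
    (M : Type v) [AddCommGroup M] [Module R M]
    (M₁ M₂ : Submodule R M)
    (hsup : M₁ ⊔ M₂ = ⊤)
    (hp₁ : Module.Projective R (M ⧸ M₁)) (hp₂ : Module.Projective R (M ⧸ M₂)) :
    IsSummand (M₁ ⊓ M₂) := by
  have hker : LinearMap.ker (M₁.mkQ.prod M₂.mkQ) = M₁ ⊓ M₂ := by
    rw [LinearMap.ker_prod, Submodule.ker_mkQ, Submodule.ker_mkQ]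
  rw [← hker]
  exact LinearMap.isSummand_ker_of_surjective
    (LinearMap.range_eq_top.1 (LinearMap.range_prod_mkQ_eq_top hsup))

theorem inf_summand_of_projective_quotients {R : Type u} [Ring R]
    (M : Type v) [AddCommGroup M] [Module R M]
    (M₁ M₂ : Submodule R M)
    (h₁ : IsSummand M₁) (h₂ : IsSummand M₂)
    (hsup : M₁ ⊔ M₂ = ⊤)
    (hp₁ : Module.Projective R (M ⧸ M₁)) (hp₂ : Module.Projective R (M ⧸ M₂)) :
    IsSummand (M₁ ⊓ M₂) :=
  inf_summand_of_projective_quotients_general M M₁ M₂ hsup hp₁ hp₂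
end
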